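/- Let n ≥ 2 and set y_n^± = (n+1 ± √(3n²+1))/(2n). For δ ∈ ℝ define q_δ(y) = (n−1)(4−3δ) + (6−2n+4(n−1)δ)·y − 2nδ·y². Then: (a) q_1(y) = 2n·(y − y_n^−)·(y_n^+ − y) for every y ∈ ℝ; (b) if 0 ≤ y ≤ y_n^+ and y ≤ 2(n−1)/n, then for ε = −2n·y_n^−·(y_n^+ − y)/(3(n−1)) and δ = 1 + ε one has q_δ(y) ≥ 0. -/

import Mathlib

/-- `y_n^± = (n+1 ± √(3n²+1)) / (2n)`: the `+` root. -/
noncomputable def yPlus (n : ℕ) : ℝ :=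
  ((n : ℝ) + 1 + Real.sqrt (3 * (n : ℝ) ^ 2 + 1)) / (2 * (n : ℝ))

/-- `y_n^± = (n+1 ± √(3n²+1)) / (2n)`: the `−` root. -/
noncomputable def yMinus (n : ℕ) : ℝ :=
  ((n : ℝ) + 1 - Real.sqrt (3 * (n : ℝ) ^ 2 + 1)) / (2 * (n : ℝ))

/-- `q_δ(y) = (n−1)(4−3δ) + (6−2n+4(n−1)δ)·y − 2nδ·y²`. -/
noncomputable def q (n : ℕ) (δ y : ℝ) : ℝ :=
  ((n : ℝ) - 1) * (4 - 3 * δ) + (6 - 2 * (n : ℝ) + 4 * ((n : ℝ) - 1) * δ) * y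
    - 2 * (n : ℝ) * δ * y ^ 2

theorem stmt_14 (n : ℕ) (hn : 2 ≤ n) :
    (∀ y : ℝ, q n 1 y = 2 * (n : ℝ) * (y - yMinus n) * (yPlus n - y)) ∧
    (∀ y : ℝ, 0 ≤ y → y ≤ yPlus n → y ≤ 2 * ((n : ℝ) - 1) / n →
      ∀ ε δ : ℝ, ε = -(2 * (n : ℝ) * yMinus n * (yPlus n - y)) / (3 * ((n : ℝ) - 1)) →
        δ = 1 + ε → q n δ y ≥ 0) := by
  have hN : (2 : ℝ) ≤ (n : ℝ) := by exact_mod_cast hn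
  have hN0 : (n : ℝ) ≠ 0 := by linarith
  have hN1 : (n : ℝ) - 1 ≠ 0 := by linarith
  obtain ⟨s, hs0, hs, hp, hm⟩ :
      ∃ s : ℝ, 0 ≤ s ∧ s ^ 2 = 3 * (n : ℝ) ^ 2 + 1 ∧
        yPlus n = ((n : ℝ) + 1 + s) / (2 * (n : ℝ)) ∧
        yMinus n = ((n : ℝ) + 1 - s) / (2 * (n : ℝ)) :=
    ⟨_, Real.sqrt_nonneg _, Real.sq_sqrt (by positivity), rfl, rfl⟩
  constructor
  · intro y
    rw [hp, hm]
    unfold q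
    field_simp
    nlinarith [hs]
  · intro y hy0 hyp hy2 ε δ hε hδ
    subst hδ; subst hε
    have hym : yMinus n < 0 := by
      rw [hm]
      have : (n : ℝ) + 1 < s := by nlinarith [hs, hs0]
      have h2n : 0 < 2 * (n : ℝ) := by linarith
      exact div_neg_of_neg_of_pos (by linarith) h2n
    have key : 3 * ((n : ℝ) - 1) * q n (1 + -(2 * (n : ℝ) * yMinus n * (yPlus n - y)) / (3 * ((n : ℝ) - 1))) y
        = 2 * (n : ℝ) * (yPlus n - y) * y *
          (3 * ((n : ℝ) - 1) - 4 * ((n : ℝ) - 1) * yMinus n + 2 * (n : ℝ) * yMinus n * y) := by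
      rw [hp, hm]
      unfold q
      field_simp
      linear_combination (3 - 3*(n:ℝ)) * hs
    have hfac : 0 ≤ 3 * ((n : ℝ) - 1) - 4 * ((n : ℝ) - 1) * yMinus n + 2 * (n : ℝ) * yMinus n * y := by
      have hy2' : (n : ℝ) * y ≤ 2 * ((n : ℝ) - 1) := by
        rw [le_div_iff₀ (by linarith : (0:ℝ) < n)] at hy2
        linarith [hy2]
      nlinarith [hym, hy2']
    have hpy : 0 ≤ yPlus n - y := by linarith
    nlinarith [key, mul_nonneg (mul_nonneg (mul_nonneg (by linarith : (0:ℝ) ≤ 2 * (n:ℝ)) hpy) hy0) hfac]
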